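/- arXiv:1912.09696 — 4 statements merged into one kernel-verified Lean document; each statement's English description precedes it below -/
import Mathlib

section
/- Nonsingularity of the linearized central path system: let X, S be symmetric positive definite n×n matrices with XS = ν·I for some ν > 0, and let A_1, ..., A_m be linearly independent symmetric matrices. If symmetric matrices U, V and z ∈ ℝ^m satisfy X·U + V·S = 0, V + Σ_i z_i A_i = 0, and ⟨A_i, U⟩ = 0 for all i, then U = 0, V = 0 and z = 0. -/
open Finset

/-- Trace inner product on real matrices. -/
def ip {n : ℕ} (U V : Matrix (Fin n) (Fin n) ℝ) : ℝ := ∑ i, ∑ j, U i j * V i j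

/-!
Pairing the first equation with `V` and using `XS = νI` gives `ν⟨V, U⟩ = -tr(VSVS)`, while
`⟨V, U⟩ = 0` because `V` lies in the span of the `A i` and `U` is orthogonal to them. Writing
`S = B*B` with `B` invertible, `tr(VSVS) = ‖BVB*‖²_F`, so `V = 0`; then `νU = -SVS = 0`, and linear
independence of the `A i` forces `z = 0`.
-/

open Matrix

lemma ip_eq_trace_mul_transpose {n : ℕ} (M N : Matrix (Fin n) (Fin n) ℝ) :
    ip M N = (M * Nᵀ).trace := by
  simp [ip, trace, mul_apply]

lemma ip_eq_zero_of_mem_span {n : ℕ} {ι : Type*} {A : ι → Matrix (Fin n) (Fin n) ℝ}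
    {U V : Matrix (Fin n) (Fin n) ℝ} (hV : V ∈ Submodule.span ℝ (Set.range A))
    (hU : ∀ i, ip (A i) U = 0) : ip V U = 0 := by
  induction hV using Submodule.span_induction with
  | mem M hM => obtain ⟨i, rfl⟩ := hM; exact hU i
  | zero => simp [ip]
  | add M N _ _ hM hN =>
    rw [ip_eq_trace_mul_transpose] at *
    rw [Matrix.add_mul, trace_add, hM, hN, add_zero]
  | smul c M _ hM =>
    rw [ip_eq_trace_mul_transpose] at *
    rw [Matrix.smul_mul, trace_smul, hM, smul_zero]

namespace Matrix

variable {n : Type*} [Fintype n] [DecidableEq n]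

open scoped MatrixOrder ComplexOrder in
theorem PosDef.eq_zero_of_trace_mul_mul_mul_eq_zero {𝕜 : Type*} [RCLike 𝕜]
    {S V : Matrix n n 𝕜} (hS : S.PosDef) (hV : V.IsHermitian)
    (h : (V * S * V * S).trace = 0) : V = 0 := by
  obtain ⟨B, hB, rfl⟩ := CStarAlgebra.isStrictlyPositive_iff_eq_star_mul_self.mp
    hS.isStrictlyPositive
  set W := B * V * Bᴴ
  have hW : Wᴴ * W = B * V * Bᴴ * B * V * Bᴴ := by
    simp only [W, conjTranspose_mul, conjTranspose_conjTranspose, hV.eq, mul_assoc]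
  have hW0 : W = 0 := by
    rw [trace_mul_comm] at h
    rw [← trace_conjTranspose_mul_self_eq_zero_iff, hW, trace_mul_comm]
    simpa only [star_eq_conjTranspose, mul_assoc] using h
  have hBV : B * V = 0 := hB.star.mul_left_eq_zero.mp hW0
  exact hB.mul_right_eq_zero.mp hBV

theorem mul_eq_smul_one_comm {K : Type*} [Field K] {X S : Matrix n n K} {c : K} (hc : c ≠ 0)
    (h : X * S = c • 1) : S * X = c • 1 := by
  have : X * (c⁻¹ • S) = 1 := by rw [Matrix.mul_smul, h, smul_smul, inv_mul_cancel₀ hc, one_smul]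
  calc S * X = c • ((c⁻¹ • S) * X) := by
        rw [Matrix.smul_mul, smul_smul, mul_inv_cancel₀ hc, one_smul]
    _ = c • 1 := by rw [mul_eq_one_comm.mp this]

end Matrix

theorem newton_system_nonsingular_general {n m : ℕ}
    (A : Fin m → Matrix (Fin n) (Fin n) ℝ) (hA : LinearIndependent ℝ A)
    (X S U V : Matrix (Fin n) (Fin n) ℝ) (z : Fin m → ℝ) (ν : ℝ) (hν : 0 < ν)
    (hS : S.PosDef)
    (hXS : X * S = ν • (1 : Matrix (Fin n) (Fin n) ℝ))
    (hU : U.IsSymm) (hV : V.IsSymm)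
    (h1 : X * U + V * S = 0)
    (h2 : V + ∑ i, z i • A i = 0)
    (h3 : ∀ i, ip (A i) U = 0) :
    U = 0 ∧ V = 0 ∧ z = 0 := by
  have hνU : ν • U = -(S * V * S) := by
    rw [← one_mul U, ← Matrix.smul_mul, ← mul_eq_smul_one_comm hν.ne' hXS, mul_assoc,
      eq_neg_of_add_eq_zero_left h1, Matrix.mul_neg, mul_assoc]
  have hVU : ip V U = 0 := by
    refine ip_eq_zero_of_mem_span (Submodule.mem_span_range_iff_exists_fun ℝ |>.mpr ⟨-z, ?_⟩) h3
    simp [neg_smul, eq_neg_of_add_eq_zero_left h2]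
  have hVSVS : (V * S * V * S).trace = 0 := by
    have : ν * ip V U = -(V * S * V * S).trace := by
      rw [ip_eq_trace_mul_transpose, hU.eq, ← smul_eq_mul, ← trace_smul, ← Matrix.mul_smul, hνU]
      simp [mul_assoc]
    simpa [hVU] using this
  have hV0 : V = 0 :=
    hS.eq_zero_of_trace_mul_mul_mul_eq_zero (isHermitian_iff_isSymm.mpr hV) hVSVS
  have hz : z = 0 :=
    funext <| Fintype.linearIndependent_iff.mp hA z (by simpa [hV0] using h2)
  have hU0 : U = 0 := by
    simpa [hV0, hν.ne'] using hνU
  exact ⟨hU0, hV0, hz⟩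

theorem newton_system_nonsingular {n m : ℕ}
    (A : Fin m → Matrix (Fin n) (Fin n) ℝ) (hA : LinearIndependent ℝ A)
    (hAsymm : ∀ i, (A i).IsSymm)
    (X S U V : Matrix (Fin n) (Fin n) ℝ) (z : Fin m → ℝ) (ν : ℝ) (hν : 0 < ν)
    (hX : X.PosDef) (hS : S.PosDef)
    (hXS : X * S = ν • (1 : Matrix (Fin n) (Fin n) ℝ))
    (hU : U.IsSymm) (hV : V.IsSymm)
    (h1 : X * U + V * S = 0)
    (h2 : V + ∑ i, z i • A i = 0)
    (h3 : ∀ i, ip (A i) U = 0) :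
    U = 0 ∧ V = 0 ∧ z = 0 :=
  newton_system_nonsingular_general A hA X S U V z ν hν hS hXS hU hV h1 h2 h3
end

section
/- Shifted monotonicity of the perturbed primal value: for η' ≥ η ≥ 0 and ε ≥ 0, let v(ε,η) be the infimum of ⟨C + ε·I_d, X⟩ over symmetric PSD X with ⟨A_i, X⟩ = b_i + η⟨A_i, I_p⟩ for all i. Then v(ε,η') - η'·⟨C + ε·I_d, I_p⟩ ≤ v(ε,η) - η·⟨C + ε·I_d, I_p⟩. -/
open Finset

/-- Optimal value (in the extended reals) of the perturbed primal SDP. -/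
noncomputable def primalVal {n m : ℕ} (C Id Ip : Matrix (Fin n) (Fin n) ℝ)
    (A : Fin m → Matrix (Fin n) (Fin n) ℝ) (b : Fin m → ℝ) (ε η : ℝ) : EReal :=
  sInf {v : EReal | ∃ X : Matrix (Fin n) (Fin n) ℝ,
    X.PosSemidef ∧ (∀ i, ip (A i) X = b i + η * ip (A i) Ip) ∧
    v = ((ip (C + ε • Id) X : ℝ) : EReal)}

/-! Shifting a feasible point `X` for `η` to `X + (η' - η) • Ip` gives a feasible point for `η'`
whose objective grows by exactly `(η' - η) • ⟨C + ε • Id, Ip⟩`, so every value of the shifted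
objective attained at `η` is attained at `η'`. -/

lemma ip_add_right {n : ℕ} (U V W : Matrix (Fin n) (Fin n) ℝ) :
    ip U (V + W) = ip U V + ip U W := by
  simp only [ip, Matrix.add_apply, mul_add, sum_add_distrib]

lemma ip_smul_right {n : ℕ} (U V : Matrix (Fin n) (Fin n) ℝ) (t : ℝ) :
    ip U (t • V) = t * ip U V := by
  simp only [ip, Matrix.smul_apply, smul_eq_mul, mul_sum, mul_left_comm]

namespace EReal

lemma sInf_sub_coe (S : Set EReal) (t : ℝ) : sInf S - t = ⨅ x ∈ S, x - t :=
  GaloisConnection.u_sInf fun _ _ =>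
    (le_sub_iff_add_le (.inl (coe_ne_bot t)) (.inl (coe_ne_top t))).symm

lemma sInf_sub_coe_le_sInf_sub_coe {S T : Set EReal} {s t : ℝ} (h : ∀ x ∈ S, x - t + s ∈ T) :
    sInf T - s ≤ sInf S - t := by
  rw [sInf_sub_coe, sInf_sub_coe]
  refine le_iInf₂ fun x hx => iInf₂_le_of_le (x - t + s) (h x hx) ?_
  rw [add_sub_cancel_right]

end EReal

theorem primalVal_shifted_monotone_in_eta_general {n m : ℕ}
    (C Id Ip : Matrix (Fin n) (Fin n) ℝ) (A : Fin m → Matrix (Fin n) (Fin n) ℝ)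
    (b : Fin m → ℝ) (hIp : Ip.PosDef)
    (ε η η' : ℝ) (hηη' : η ≤ η') :
    primalVal C Id Ip A b ε η' - ((η' * ip (C + ε • Id) Ip : ℝ) : EReal) ≤
      primalVal C Id Ip A b ε η - ((η * ip (C + ε • Id) Ip : ℝ) : EReal) := by
  refine EReal.sInf_sub_coe_le_sInf_sub_coe ?_
  rintro _ ⟨X, hX, hfeas, rfl⟩
  refine ⟨X + (η' - η) • Ip, hX.add (hIp.posSemidef.smul (sub_nonneg.2 hηη')), fun i => ?_, ?_⟩
  · rw [ip_add_right, ip_smul_right, hfeas i]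
    ring
  · rw [ip_add_right, ip_smul_right]
    norm_cast
    ring

theorem primalVal_shifted_monotone_in_eta {n m : ℕ}
    (C Id Ip : Matrix (Fin n) (Fin n) ℝ) (A : Fin m → Matrix (Fin n) (Fin n) ℝ)
    (b : Fin m → ℝ) (hId : Id.PosDef) (hIp : Ip.PosDef)
    (ε η η' : ℝ) (hε : 0 ≤ ε) (hη : 0 ≤ η) (hηη' : η ≤ η') :
    primalVal C Id Ip A b ε η' - ((η' * ip (C + ε • Id) Ip : ℝ) : EReal) ≤
      primalVal C Id Ip A b ε η - ((η * ip (C + ε • Id) Ip : ℝ) : EReal) :=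
  primalVal_shifted_monotone_in_eta_general C Id Ip A b hIp ε η η' hηη'
end

section
/- Ramana's example, dual side: the supremum of y_1 over all (y_1, y_2) ∈ ℝ² such that the symmetric matrix [[1 - y_1, 0, 0], [0, -y_2, -y_1], [0, -y_1, 0]] is positive semidefinite equals 0, and it is attained. -/
/-!
Since the `(3,3)` entry of the matrix is `0`, positive semidefiniteness forces the `(2,3)` entry
`-y₁` to vanish: on the principal `2 × 2` minor with rows and columns `2, 3` the quadratic form
is `-y₂ t² - 2 y₁ t`, which takes negative values unless `y₁ = 0`. Conversely, `y₁ = y₂ = 0`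
gives the positive semidefinite matrix `diag(1, 0, 0)`.
-/

namespace Matrix.PosSemidef

variable {n R : Type*} [Field R] [LinearOrder R] [IsStrictOrderedRing R] [StarRing R]
  [TrivialStar R]

theorem apply_eq_zero_of_diag_eq_zero {A : Matrix n n R} (hA : A.PosSemidef) {j : n}
    (hj : A j j = 0) (i : n) : A i j = 0 := by
  have hsymm : A j i = A i j := by simpa using hA.isHermitian.apply i j
  have hquad : ∀ t : R, 0 ≤ A i i * (t * t) + 2 * A i j * t + 0 := by
    intro t
    have := (hA.submatrix ![i, j]).dotProduct_mulVec_nonneg ![t, 1]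
    simp only [star_trivial, dotProduct, mulVec, Fin.sum_univ_two, submatrix_apply,
      cons_val_zero, cons_val_one, hj, hsymm] at this
    linarith
  have hdiscrim := discrim_le_zero hquad
  rw [discrim] at hdiscrim
  nlinarith [sq_nonneg (A i j)]

end Matrix.PosSemidef

theorem ramana_dual_value :
    IsGreatest {v : ℝ | ∃ y₁ y₂ : ℝ,
      (!![1 - y₁, 0, 0; 0, -y₂, -y₁; 0, -y₁, 0] : Matrix (Fin 3) (Fin 3) ℝ).PosSemidef ∧
      v = y₁} 0 := by
  constructor
  · have hdiag : (!![1 - 0, 0, 0; 0, -0, -0; 0, -0, 0] : Matrix (Fin 3) (Fin 3) ℝ) =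
        Matrix.diagonal ![1, 0, 0] := by
      ext i j
      fin_cases i <;> fin_cases j <;> simp
    refine ⟨0, 0, ?_, rfl⟩
    rw [hdiag, Matrix.posSemidef_diagonal_iff]
    intro i
    fin_cases i <;> simp
  · rintro v ⟨y₁, y₂, hpsd, rfl⟩
    have h : -v = 0 := hpsd.apply_eq_zero_of_diag_eq_zero (i := 1) (j := 2) rfl
    exact (neg_eq_zero.mp h).le
end

section
/- Explicit perturbed optimal value in Example 2: for ε > 0 and η ≥ 0, the supremum of -(1+η)y_1 - η·y_2 over (y_1, y_2) ∈ ℝ² such that [[y_2 + ε, 0, 1], [0, y_1 + ε, 0], [1, 0, ε]] is positive semidefinite equals (1+η)·ε - η·(1 - ε²)/ε. -/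
/-!
For `c > 0` the matrix `!![a, 0, d; 0, b, 0; d, 0, c]` is positive semidefinite exactly when
`b ≥ 0` and `d² ≤ a c`, so the feasible set is the quadrant `y₁ ≥ -ε`, `y₂ ≥ (1 - ε²)/ε`.
The objective has nonpositive coefficients, hence attains its maximum at the corner.
-/

open Matrix

lemma dotProduct_mulVec_corner_coupled (a b c d : ℝ) (x : Fin 3 → ℝ) :
    star x ⬝ᵥ (!![a, 0, d; 0, b, 0; d, 0, c] *ᵥ x) =
      a * x 0 ^ 2 + 2 * d * x 0 * x 2 + c * x 2 ^ 2 + b * x 1 ^ 2 := by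
  simp only [star_trivial, dotProduct, mulVec, Fin.sum_univ_three, of_apply, cons_val',
    cons_val_zero, cons_val_one, cons_val_two, tail_cons, empty_val',
    cons_val_fin_one, vecHead]
  ring

lemma posSemidef_corner_coupled_iff {a b c d : ℝ} (hc : 0 < c) :
    (!![a, 0, d; 0, b, 0; d, 0, c] : Matrix (Fin 3) (Fin 3) ℝ).PosSemidef ↔
      0 ≤ b ∧ d ^ 2 ≤ a * c := by
  have hHerm : (!![a, 0, d; 0, b, 0; d, 0, c] : Matrix (Fin 3) (Fin 3) ℝ).IsHermitian := by
    ext i j; fin_cases i <;> fin_cases j <;> rfl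
  simp only [posSemidef_iff_dotProduct_mulVec, hHerm, true_and, dotProduct_mulVec_corner_coupled]
  constructor
  · intro h
    have hb := h ![0, 1, 0]
    have hdet := h ![c, 0, -d]
    simp only [cons_val_zero, cons_val_one, cons_val, zero_pow two_ne_zero, one_pow, mul_zero,
      mul_one, add_zero, zero_add] at hb hdet
    have hscaled : 0 ≤ c * (a * c - d ^ 2) := by linarith
    exact ⟨hb, by linarith [nonneg_of_mul_nonneg_right hscaled hc]⟩
  · rintro ⟨hb, hdet⟩ x
    -- c · (a x₀² + 2d x₀x₂ + c x₂²) = (d x₀ + c x₂)² + (ac - d²) x₀²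
    have hscaled : 0 ≤ c * (a * x 0 ^ 2 + 2 * d * x 0 * x 2 + c * x 2 ^ 2) := by
      nlinarith [sq_nonneg (d * x 0 + c * x 2), mul_nonneg (sub_nonneg.2 hdet) (sq_nonneg (x 0))]
    have hform := nonneg_of_mul_nonneg_right hscaled hc
    linarith [mul_nonneg hb (sq_nonneg (x 1))]

lemma isGreatest_neg_linear_on_quadrant {p q a b : ℝ} (hp : 0 ≤ p) (hq : 0 ≤ q) :
    IsGreatest {v : ℝ | ∃ y₁ y₂ : ℝ, (a ≤ y₁ ∧ b ≤ y₂) ∧ v = -p * y₁ - q * y₂}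
      (-p * a - q * b) := by
  refine ⟨⟨a, b, ⟨le_rfl, le_rfl⟩, rfl⟩, ?_⟩
  rintro v ⟨y₁, y₂, ⟨h₁, h₂⟩, rfl⟩
  nlinarith [mul_le_mul_of_nonneg_left h₁ hp, mul_le_mul_of_nonneg_left h₂ hq]

theorem example2_perturbed_value (ε η : ℝ) (hε : 0 < ε) (hη : 0 ≤ η) :
    sSup {v : ℝ | ∃ y₁ y₂ : ℝ,
      (!![y₂ + ε, 0, 1; 0, y₁ + ε, 0; 1, 0, ε] : Matrix (Fin 3) (Fin 3) ℝ).PosSemidef ∧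
      v = -(1 + η) * y₁ - η * y₂} = (1 + η) * ε - η * (1 - ε ^ 2) / ε := by
  have hfeasible (y₁ y₂ : ℝ) :
      (!![y₂ + ε, 0, 1; 0, y₁ + ε, 0; 1, 0, ε] : Matrix (Fin 3) (Fin 3) ℝ).PosSemidef ↔
        -ε ≤ y₁ ∧ (1 - ε ^ 2) / ε ≤ y₂ := by
    rw [posSemidef_corner_coupled_iff hε, div_le_iff₀ hε]
    constructor <;> rintro ⟨h₁, h₂⟩ <;> constructor <;> linarith
  simp_rw [hfeasible]
  rw [(isGreatest_neg_linear_on_quadrant (by linarith) hη).csSup_eq]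
  ring
end
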